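/- For every k ≥ 1, the ordered product ∏→_{(i,j)} R_{ij}(j−i), taken over all pairs (i, j) with 1 ≤ i < j ≤ k arranged in lexicographic order from left to right, equals k! · A_k as operators on (ℂⁿ)^{⊗k}, where A_k is the normalized antisymmetrizer. -/

import Mathlib

noncomputable section
open scoped Kronecker
open Matrix

/-- Square matrices acting on the tensor power `(ℂⁿ)^{⊗ι}`, modelled on the
function basis `ι → Fin n`. -/
abbrev TMat (ι : Type) (n : ℕ) := Matrix (ι → Fin n) (ι → Fin n) ℂ

/-- The matrix units `E_{ij}` of `End(ℂⁿ)`. -/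
def matE (n : ℕ) (i j : Fin n) : Matrix (Fin n) (Fin n) ℂ := Matrix.single i j 1

/-- The flip `P = Σ E_{ij} ⊗ E_{ji}` on `ℂⁿ ⊗ ℂⁿ`. -/
def flipP (n : ℕ) : Matrix (Fin n × Fin n) (Fin n × Fin n) ℂ :=
  ∑ i : Fin n, ∑ j : Fin n, matE n i j ⊗ₖ matE n j i

/-- `P̄ = Σ E_{ij} ⊗ E_{ij}` on `ℂⁿ ⊗ ℂⁿ`. -/
def PbarM (n : ℕ) : Matrix (Fin n × Fin n) (Fin n × Fin n) ℂ :=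
  ∑ i : Fin n, ∑ j : Fin n, matE n i j ⊗ₖ matE n i j

/-- The conjugate `X̃ = G⁻¹ Xᵀ G` of `X` relative to the bilinear form with
Gram matrix `G`, i.e. `⟨X u, v⟩ = ⟨u, X̃ v⟩` where `⟨u, v⟩ = uᵀ G v`. -/
def conjF {n : ℕ} (G X : Matrix (Fin n) (Fin n) ℂ) : Matrix (Fin n) (Fin n) ℂ :=
  G⁻¹ * Xᵀ * G

/-- `P̃ = Σ Ẽ_{ij} ⊗ E_{ji}`. -/
def PtilM (n : ℕ) (G : Matrix (Fin n) (Fin n) ℂ) : Matrix (Fin n × Fin n) (Fin n × Fin n) ℂ :=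
  ∑ i : Fin n, ∑ j : Fin n, conjF G (matE n i j) ⊗ₖ matE n j i

/-- `P̂ = Σ Ẽ_{ij} ⊗ E_{ij}`. -/
def PhatM (n : ℕ) (G : Matrix (Fin n) (Fin n) ℂ) : Matrix (Fin n × Fin n) (Fin n × Fin n) ℂ :=
  ∑ i : Fin n, ∑ j : Fin n, conjF G (matE n i j) ⊗ₖ matE n i j

/-- The Yang R-matrix `R(x) = 1 − P x⁻¹`. -/
def Rm (n : ℕ) (x : ℂ) : Matrix (Fin n × Fin n) (Fin n × Fin n) ℂ := 1 - x⁻¹ • flipP n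

/-- `R̄(x) = 1 − P̄ x⁻¹`. -/
def RbarM (n : ℕ) (x : ℂ) : Matrix (Fin n × Fin n) (Fin n × Fin n) ℂ := 1 - x⁻¹ • PbarM n

/-- `R̃(x) = 1 − P̃ x⁻¹`. -/
def RtilM (n : ℕ) (G : Matrix (Fin n) (Fin n) ℂ) (x : ℂ) :
    Matrix (Fin n × Fin n) (Fin n × Fin n) ℂ := 1 - x⁻¹ • PtilM n G

/-- `R̂(x) = 1 − P̂ x⁻¹`. -/
def RhatM (n : ℕ) (G : Matrix (Fin n) (Fin n) ℂ) (x : ℂ) :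
    Matrix (Fin n × Fin n) (Fin n × Fin n) ℂ := 1 - x⁻¹ • PhatM n G

/-- `Z_{ij}` : the operator on a tensor power of `ℂⁿ` acting as the two-factor
operator `Z` in the `i`-th and `j`-th tensor factors and as the identity elsewhere. -/
def lift2 {n : ℕ} {ι : Type} [Fintype ι] [DecidableEq ι] (i j : ι)
    (Z : Matrix (Fin n × Fin n) (Fin n × Fin n) ℂ) : TMat ι n :=
  fun f g => Z (f i, f j) (g i, g j) *
    ∏ p : ι, if p = i ∨ p = j then 1 else (if f p = g p then 1 else 0)

/-- The operator `P_σ` permuting the tensor factors of `(ℂⁿ)^{⊗k}` according to `σ`. -/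
def permMat (n k : ℕ) (σ : Equiv.Perm (Fin k)) : TMat (Fin k) n :=
  fun f g => if f ∘ σ = g then 1 else 0

/-- The normalized antisymmetrizer `A_k = (1/k!) Σ_σ sgn(σ) P_σ` on `(ℂⁿ)^{⊗k}`. -/
def antisym (n k : ℕ) : TMat (Fin k) n :=
  (k.factorial : ℂ)⁻¹ • ∑ σ : Equiv.Perm (Fin k), (((Equiv.Perm.sign σ : ℤ) : ℂ)) • permMat n k σ

/-- The list of all pairs `(a, b)` with `a < b` in `Fin m`, in lexicographic order. -/
def pairsLex (m : ℕ) : List (Fin m × Fin m) :=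
  (List.finRange m).flatMap (fun a =>
    ((List.finRange m).filter (fun b => decide (a < b))).map (fun b => (a, b)))

/-
Index the tensor factors by `0, …, k-1` and let `S_b = Σ sgn(σ) P_σ`, the sum over the
permutations fixing `0, …, b-1`; thus `S_0 = k! A_k`, `S_k = 1`, and
`R_{ij}(x) = 1 - x⁻¹ P_{(i j)}`. The `a`-th row of the lexicographic product turns `S_{a+1}` into
`S_a`. Splitting the permutations fixing `0, …, a-1` into left cosets of those also fixing `a`
gives `S_a = (1 - Σ_{r > a} P_{(a r)}) S_{a+1}`. On the other side, for `a < b < r`,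
`P_{(a b)} P_{(a r)} = P_{(a r)} P_{(r b)}` and `P_{(r b)} S_{a+1} = -S_{a+1}`, so the factors
`1 - P_{(a b)}/(b - a)` telescope by `1/(b-a) = 1/(b+1-a) + 1/((b-a)(b+1-a))`.
-/

open Equiv Finset

@[simps]
def permMatHom (n k : ℕ) : Perm (Fin k) →* TMat (Fin k) n where
  toFun := permMat n k
  map_one' := by
    ext f g
    simp [permMat, one_apply]
  map_mul' σ τ := by
    ext f g
    rw [mul_apply, sum_eq_single (f ∘ σ)]
    · simp only [permMat, Perm.coe_mul, one_mul, if_true]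
      rfl
    · intro φ _ hφ
      simp [permMat, Ne.symm hφ]
    · simp

variable {n k : ℕ}

theorem flipP_apply (a b c d : Fin n) :
    flipP n (a, b) (c, d) = if a = d ∧ b = c then 1 else 0 := by
  simp [flipP, matE, single_apply, Matrix.sum_apply, ite_and, sum_ite_eq, eq_comm]

theorem lift2_apply_eq_boole {i j : Fin k} (Z : Matrix (Fin n × Fin n) (Fin n × Fin n) ℂ)
    (Q : (Fin k → Fin n) → (Fin k → Fin n) → Prop) [∀ f g, Decidable (Q f g)]
    (hZ : ∀ f g, Z (f i, f j) (g i, g j) = if Q f g then 1 else 0) (f g : Fin k → Fin n) :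
    lift2 i j Z f g = if Q f g ∧ ∀ p, p ≠ i → p ≠ j → f p = g p then 1 else 0 := by
  rw [lift2, hZ, ite_and, ite_mul, one_mul, zero_mul]
  congr 1
  have hfactor : ∀ p, (if p = i ∨ p = j then (1 : ℂ) else if f p = g p then 1 else 0) =
      if p ≠ i → p ≠ j → f p = g p then 1 else 0 := by
    intro p
    by_cases hi : p = i <;> by_cases hj : p = j <;> simp [hi, hj]
  simp only [hfactor, prod_boole, mem_univ, true_implies]

theorem lift2_one (i j : Fin k) :
    lift2 i j (1 : Matrix (Fin n × Fin n) (Fin n × Fin n) ℂ) = 1 := by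
  ext f g
  rw [lift2_apply_eq_boole 1 (fun f g => f i = g i ∧ f j = g j) (fun f g => by simp [one_apply]),
    one_apply]
  refine if_congr ⟨fun ⟨⟨hi, hj⟩, h⟩ => funext fun p => ?_, fun h => by simp [h]⟩ rfl rfl
  by_cases hpi : p = i
  · exact hpi ▸ hi
  by_cases hpj : p = j
  · exact hpj ▸ hj
  exact h p hpi hpj

theorem lift2_flipP (i j : Fin k) :
    lift2 i j (flipP n) = permMat n k (swap i j) := by
  ext f g
  rw [lift2_apply_eq_boole _ (fun f g => f i = g j ∧ f j = g i) (fun f g => flipP_apply ..),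
    permMat]
  refine if_congr ⟨fun ⟨⟨hi, hj⟩, h⟩ => funext fun p => ?_, fun h => ?_⟩ rfl rfl
  · by_cases hpi : p = i
    · simp [hpi, hj]
    by_cases hpj : p = j
    · simp [hpj, hi]
    simpa [swap_apply_of_ne_of_ne hpi hpj] using h p hpi hpj
  · subst h
    exact ⟨by simp, fun p hpi hpj => by simp [swap_apply_of_ne_of_ne hpi hpj]⟩

theorem lift2_Rm (i j : Fin k) (x : ℂ) :
    lift2 i j (Rm n x) = 1 - x⁻¹ • permMatHom n k (swap i j) := by
  have hsub : lift2 i j (1 - x⁻¹ • flipP n) = lift2 i j 1 - x⁻¹ • lift2 i j (flipP n) := by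
    ext f g
    simp [lift2, sub_mul, mul_assoc]
  rw [Rm, hsub, lift2_one, lift2_flipP]
  rfl

section SignedSum

variable {α R : Type*} [Fintype α] [DecidableEq α] [Ring R] (ρ : Perm α →* R)

open Classical in
noncomputable def signedSum (H : Subgroup (Perm α)) : R :=
  ∑ σ ∈ univ.filter (· ∈ H), (Perm.sign σ : ℤ) • ρ σ

theorem mul_signedSum_of_mem {H : Subgroup (Perm α)} {τ : Perm α} (hτ : τ ∈ H) :
    ρ τ * signedSum ρ H = (Perm.sign τ : ℤ) • signedSum ρ H := by
  rw [signedSum, mul_sum, smul_sum]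
  refine sum_nbij' (τ * ·) (τ⁻¹ * ·) ?_ ?_ (by simp) (by simp) fun σ _ => ?_
  · simpa using fun σ hσ => H.mul_mem hτ hσ
  · simpa using fun σ hσ => H.mul_mem (H.inv_mem hτ) hσ
  · rw [mul_smul_comm, ← map_mul, smul_smul, ← Units.val_mul, Perm.sign_mul, ← mul_assoc,
      Int.units_mul_self, one_mul]

theorem signedSum_bot : signedSum ρ ⊥ = 1 := by
  rw [signedSum, sum_eq_single_of_mem 1 (by simp) (by simp +contextual)]
  simp

theorem signedSum_top : signedSum ρ ⊤ = ∑ σ, (Perm.sign σ : ℤ) • ρ σ := by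
  simp [signedSum]

end SignedSum

section FixLt

variable {k : ℕ}

def fixLt (k b : ℕ) : Subgroup (Perm (Fin k)) :=
  fixingSubgroup (Perm (Fin k)) {x : Fin k | (x : ℕ) < b}

theorem mem_fixLt {b : ℕ} {σ : Perm (Fin k)} :
    σ ∈ fixLt k b ↔ ∀ x : Fin k, (x : ℕ) < b → σ x = x := by
  simp [fixLt, mem_fixingSubgroup_iff, Perm.smul_def]

theorem fixLt_zero : fixLt k 0 = ⊤ := by
  simp [fixLt]

theorem fixLt_of_le {b : ℕ} (hkb : k ≤ b) : fixLt k b = ⊥ :=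
  (Subgroup.eq_bot_iff_forall _).2 fun _ hσ => Perm.ext fun x => mem_fixLt.1 hσ x (by omega)

theorem swap_mem_fixLt {b : ℕ} {r s : Fin k} (hr : b ≤ r) (hs : b ≤ s) : swap r s ∈ fixLt k b :=
  mem_fixLt.2 fun x hx => swap_apply_of_ne_of_ne (by omega) (by omega)

theorem mem_fixLt_succ {a : Fin k} {σ : Perm (Fin k)} :
    σ ∈ fixLt k (a + 1) ↔ σ ∈ fixLt k a ∧ σ a = a := by
  simp only [mem_fixLt]
  refine ⟨fun h => ⟨fun x hx => h x (by omega), h a (by omega)⟩, fun ⟨h, ha⟩ x hx => ?_⟩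
  rcases Nat.lt_succ_iff_lt_or_eq.1 hx with hx | hx
  · exact h x hx
  · rwa [Fin.ext hx]

theorem le_apply_of_mem_fixLt {a : Fin k} {σ : Perm (Fin k)} (hσ : σ ∈ fixLt k a) : a ≤ σ a := by
  by_contra! hlt
  have : σ (σ a) = σ a := mem_fixLt.1 hσ _ hlt
  exact hlt.ne (σ.injective this)

variable {R : Type*} [Ring R] (ρ : Perm (Fin k) →* R)

theorem signedSum_fixLt_eq_sum_Ici (a : Fin k) :
    signedSum ρ (fixLt k a) = ∑ r ∈ Ici a,
      (Perm.sign (swap a r) : ℤ) • (ρ (swap a r) * signedSum ρ (fixLt k (a + 1))) := by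
  simp only [signedSum, mul_sum, smul_sum, ← sum_product']
  refine sum_nbij' (fun σ => (σ a, swap a (σ a) * σ)) (fun p => swap a p.1 * p.2)
    ?_ ?_ ?_ ?_ ?_
  · intro σ hσ
    simp only [mem_filter_univ] at hσ
    simp only [mem_product, mem_Ici, mem_filter_univ, mem_fixLt_succ]
    exact ⟨le_apply_of_mem_fixLt hσ, (fixLt k a).mul_mem
      (swap_mem_fixLt le_rfl (le_apply_of_mem_fixLt hσ)) hσ, by simp⟩
  · rintro ⟨r, τ⟩ hp
    simp only [mem_product, mem_Ici, mem_filter_univ, mem_fixLt_succ] at hp ⊢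
    exact (fixLt k a).mul_mem (swap_mem_fixLt le_rfl hp.1) hp.2.1
  · intro σ _
    simp
  · rintro ⟨r, τ⟩ hp
    simp only [mem_product, mem_Ici, mem_filter_univ, mem_fixLt_succ] at hp
    simp [hp.2.2]
  · intro σ _
    rw [mul_smul_comm, ← map_mul, swap_mul_self_mul, smul_smul, ← Units.val_mul, ← Perm.sign_mul,
      swap_mul_self_mul]

theorem signedSum_fixLt_eq (a : Fin k) :
    signedSum ρ (fixLt k a) = signedSum ρ (fixLt k (a + 1)) -
      ∑ r ∈ Ioi a, ρ (swap a r) * signedSum ρ (fixLt k (a + 1)) := by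
  rw [signedSum_fixLt_eq_sum_Ici, ← Ioi_insert, sum_insert (by simp), sub_eq_add_neg,
    ← sum_neg_distrib]
  congr 1
  · rw [swap_self, ← Perm.one_def]
    simp
  · refine sum_congr rfl fun r hr => ?_
    rw [Perm.sign_swap (mem_Ioi.1 hr).ne]
    simp

end FixLt

theorem List.map_val_eq_range' {k b : ℕ} {L : List (Fin k)} (hL : L.Pairwise (· < ·))
    (hmem : ∀ j : Fin k, j ∈ L ↔ b ≤ j) : L.map Fin.val = List.range' b (k - b) := by
  refine (hL.map Fin.val fun _ _ h => h).eq_of_mem_iff (List.pairwise_lt_range' ..) fun x => ?_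
  simp only [List.mem_map, List.mem_range'_1]
  constructor
  · rintro ⟨j, hj, rfl⟩
    exact ⟨(hmem j).1 hj, by omega⟩
  · rintro ⟨hbx, hxk⟩
    exact ⟨⟨x, by omega⟩, (hmem _).2 hbx, rfl⟩

theorem sum_Ioi_eq_sum_filter_finRange {k : ℕ} {M : Type*} [AddCommMonoid M] (a : Fin k)
    (f : Fin k → M) :
    ∑ r ∈ Ioi a, f r = (((List.finRange k).filter fun b => decide (a < b)).map f).sum := by
  rw [← List.sum_toFinset _ ((List.nodup_finRange k).filter _)]
  congr 1
  ext
  simp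

section Rows

variable {k : ℕ} {R K : Type*} [Ring R] [Field K] [CharZero K] [Algebra K R]
  (ρ : Perm (Fin k) →* R)

theorem swap_mul_swap_mul_signedSum {a b r : Fin k} (hab : a < b) (hbr : b < r) :
    ρ (swap a b) * (ρ (swap a r) * signedSum ρ (fixLt k (a + 1))) =
      -(ρ (swap a r) * signedSum ρ (fixLt k (a + 1))) := by
  rw [← mul_assoc, ← map_mul, swap_mul_eq_mul_swap, swap_inv, swap_apply_left,
    swap_apply_of_ne_of_ne hab.ne' hbr.ne, map_mul, mul_assoc,
    mul_signedSum_of_mem ρ (swap_mem_fixLt (by omega) (by omega)), Perm.sign_swap hbr.ne']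
  simp

theorem prod_one_sub_smul_swap_mul_signedSum {a : Fin k} (L : List (Fin k)) {b l : ℕ}
    (hab : (a : ℕ) < b) (hL : L.map Fin.val = List.range' b l) :
    (L.map fun j : Fin k => 1 - (((j : ℕ) : K) - a)⁻¹ • ρ (swap a j)).prod *
        signedSum ρ (fixLt k (a + 1)) =
      signedSum ρ (fixLt k (a + 1)) -
        ((b : K) - a)⁻¹ • (L.map fun r => ρ (swap a r) * signedSum ρ (fixLt k (a + 1))).sum := by
  set S := signedSum ρ (fixLt k (a + 1))
  induction L generalizing b l with
  | nil => simp
  | cons j L ih =>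
    obtain _ | l := l
    · simp at hL
    rw [List.map_cons, List.range'_succ, List.cons.injEq] at hL
    obtain ⟨rfl, hL⟩ := hL
    have hneg : ρ (swap a j) * (L.map fun r => ρ (swap a r) * S).sum =
        -(L.map fun r => ρ (swap a r) * S).sum := by
      rw [← List.sum_map_mul_left, List.sum_neg, List.map_map]
      refine congrArg List.sum (List.map_congr_left fun r hr => ?_)
      have : (j : ℕ) < r := by
        have := List.mem_map_of_mem (f := Fin.val) hr
        rw [hL, List.mem_range'_1] at this
        omega
      exact swap_mul_swap_mul_signedSum ρ hab this
    have hcoeff : ((j : K) - a)⁻¹ =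
        ((j + 1 : ℕ) - a : K)⁻¹ + ((j : K) - a)⁻¹ * ((j + 1 : ℕ) - a : K)⁻¹ := by
      have h1 : (j : K) - a ≠ 0 := sub_ne_zero.2 (by exact_mod_cast hab.ne')
      have h2 : ((j + 1 : ℕ) : K) - a ≠ 0 := sub_ne_zero.2 (by exact_mod_cast (by omega))
      field_simp
      push_cast
      ring
    rw [List.map_cons, List.prod_cons, mul_assoc, ih (by omega) hL, List.map_cons, List.sum_cons]
    simp only [mul_sub, sub_mul, one_mul, smul_mul_assoc, mul_smul_comm, hneg]
    linear_combination (norm := module) hcoeff • (L.map fun r => ρ (swap a r) * S).sum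

theorem prod_row_mul_signedSum (a : Fin k) :
    (((List.finRange k).filter fun b => decide (a < b)).map
        fun j : Fin k => 1 - (((j : ℕ) : K) - a)⁻¹ • ρ (swap a j)).prod *
      signedSum ρ (fixLt k (a + 1)) = signedSum ρ (fixLt k a) := by
  have hrow : (((List.finRange k).filter fun b => decide (a < b)).map Fin.val) =
      List.range' (a + 1) (k - (a + 1)) :=
    List.map_val_eq_range' ((List.pairwise_lt_finRange k).filter _) fun j => by
      simp only [List.mem_filter, List.mem_finRange, true_and, decide_eq_true_eq, Fin.lt_def]
      omega
  rw [prod_one_sub_smul_swap_mul_signedSum ρ _ (Nat.lt_succ_self a) hrow, signedSum_fixLt_eq,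
    sum_Ioi_eq_sum_filter_finRange]
  simp

theorem prod_rows_eq_signedSum (L : List (Fin k)) {b : ℕ}
    (hL : L.map Fin.val = List.range' b (k - b)) :
    ((L.flatMap fun a => ((List.finRange k).filter fun c => decide (a < c)).map (a, ·)).map
        fun ij : Fin k × Fin k => 1 - (((ij.2 : ℕ) : K) - ij.1)⁻¹ • ρ (swap ij.1 ij.2)).prod =
      signedSum ρ (fixLt k b) := by
  induction L generalizing b with
  | nil =>
    have hkb : k - b = 0 := List.range'_eq_nil_iff.1 hL.symm
    rw [fixLt_of_le (by omega), signedSum_bot]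
    rfl
  | cons a L ih =>
    rw [List.map_cons, eq_comm, List.range'_eq_cons_iff] at hL
    obtain ⟨rfl, -, hL⟩ := hL
    rw [List.flatMap_cons, List.map_append, List.prod_append, ih (by rwa [Nat.sub_sub] at hL),
      List.map_map]
    exact prod_row_mul_signedSum ρ a

end Rows

theorem stmt8_general (n k : ℕ) :
    ((pairsLex k).map (fun ij =>
      lift2 ij.1 ij.2 (Rm n (((ij.2 : ℕ) : ℂ) - ((ij.1 : ℕ) : ℂ))))).prod
  = (k.factorial : ℂ) • antisym n k := by
  simp only [lift2_Rm]
  rw [pairsLex, prod_rows_eq_signedSum _ _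
      (List.map_val_eq_range' (b := 0) (List.pairwise_lt_finRange k) (by simp)),
    fixLt_zero, signedSum_top, antisym, smul_smul,
    mul_inv_cancel₀ (by exact_mod_cast k.factorial_ne_zero), one_smul]
  simp [Int.cast_smul_eq_zsmul]

/-- The fusion formula `∏→_{(i,j), i<j, lex} R_{ij}(j−i) = k! A_k` on `(ℂⁿ)^{⊗k}`. -/
theorem stmt8 (n k : ℕ) (hn : 1 ≤ n) (hk : 1 ≤ k) :
    ((pairsLex k).map (fun ij =>
      lift2 ij.1 ij.2 (Rm n (((ij.2 : ℕ) : ℂ) - ((ij.1 : ℕ) : ℂ))))).prod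
  = (k.factorial : ℂ) • antisym n k :=
  stmt8_general n k
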